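/- arXiv:2408.07449 — 2 statements merged into one kernel-verified Lean document; each statement's English description precedes it below -/
import Mathlib

section
/- Let F : (−1,1) → ℝ be C¹, convex with F'' ≥ θ > 0, F'(s) → ±∞ as s → ±1, and let m ∈ [0,1) be such that F' > 0 on [m,1), F' < 0 on (−1,−m]. Let Γ be a closed surface of finite measure and φ : Γ → (−1,1) measurable with mean value φ̄ satisfying |φ̄| < m. Then ‖F'(φ)‖_{L¹(Γ)} ≤ C₁ |∫_Γ F'(φ)(φ − φ̄) dσ| + C₂, where C₁ = 1/δ₁ with δ₁ = min{φ̄+m, m−φ̄} and C₂ = 2 max_{|s|≤m} |F'(s)| · |Γ|. -/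
/-!
Strong monotonicity makes `g = F'` monotone, so `(g s - g φ̄) (s - φ̄) ≥ 0`. For `|s| ≥ m` the
sign condition on `g` and `|s - φ̄| ≥ δ := min (φ̄ + m) (m - φ̄)` upgrade this to
`δ |g s| ≤ (g s - g φ̄) (s - φ̄) + δ |g φ̄|`, while for `|s| < m` simply `|g s| ≤ M`, the
supremum of `|g|` on `[-m, m]`. Integrating at `s = φ x`, the term `g φ̄ (φ - φ̄)` has
integral zero, and dividing by `δ` gives the estimate.
-/

open MeasureTheory Set

theorem monotoneOn_of_mul_sub_nonneg {g : ℝ → ℝ} {S : Set ℝ}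
    (h : ∀ s ∈ S, ∀ t ∈ S, 0 ≤ (g t - g s) * (t - s)) : MonotoneOn g S := by
  intro s hs t ht hst
  rcases hst.eq_or_lt with rfl | hlt
  · exact le_rfl
  · exact sub_nonneg.1 (nonneg_of_mul_nonneg_left (h s hs t ht) (sub_pos.2 hlt))

theorem MonotoneOn.mul_sub_nonneg {g : ℝ → ℝ} {S : Set ℝ} (hg : MonotoneOn g S)
    {s c : ℝ} (hs : s ∈ S) (hc : c ∈ S) : 0 ≤ (g s - g c) * (s - c) := by
  rcases le_total c s with h | h
  · exact mul_nonneg (sub_nonneg.2 (hg hc hs h)) (sub_nonneg.2 h)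
  · exact mul_nonneg_of_nonpos_of_nonpos (sub_nonpos.2 (hg hs hc h)) (sub_nonpos.2 h)

theorem MonotoneOn.abs_le_biSup_abs {g : ℝ → ℝ} {a b s : ℝ} (hg : MonotoneOn g (Icc a b))
    (hs : s ∈ Icc a b) : |g s| ≤ ⨆ t ∈ Icc a b, |g t| := by
  have hab : a ≤ b := hs.1.trans hs.2
  refine le_ciSup₂ (f := fun t (_ : t ∈ Icc a b) => |g t|) ⟨max |g a| |g b|, ?_⟩ s hs
  rintro _ ⟨_, ⟨t, rfl⟩, ⟨ht, rfl⟩⟩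
  exact abs_le_max_abs_abs (hg (left_mem_Icc.2 hab) ht ht.1) (hg ht (right_mem_Icc.2 hab) ht.2)

theorem MonotoneOn.mul_abs_le {g : ℝ → ℝ} {S : Set ℝ} (hg : MonotoneOn g S)
    {m c δ M s : ℝ} (hs : s ∈ S) (hc : c ∈ S) (hpos : m ≤ s → 0 ≤ g s)
    (hneg : s ≤ -m → g s ≤ 0) (hmid : -m < s → s < m → |g s| ≤ M) (hgc : |g c| ≤ M)
    (hδ : 0 ≤ δ) (hδ₁ : δ ≤ c + m) (hδ₂ : δ ≤ m - c) :
    δ * |g s| ≤ (g s - g c) * (s - c) + δ * (2 * M) := by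
  have hprod := hg.mul_sub_nonneg hs hc
  obtain ⟨hcM₁, hcM₂⟩ := abs_le.1 hgc
  rcases le_or_gt m s with hms | hsm
  · have hcs : g c ≤ g s := hg hc hs (by linarith)
    have hgain : (g s - g c) * δ ≤ (g s - g c) * (s - c) :=
      mul_le_mul_of_nonneg_left (by linarith) (sub_nonneg.2 hcs)
    rw [abs_of_nonneg (hpos hms)]
    nlinarith [mul_le_mul_of_nonneg_left hcM₂ hδ]
  rcases le_or_gt s (-m) with hsm' | hms'
  · have hsc : g s ≤ g c := hg hs hc (by linarith)
    have hgain : (g c - g s) * δ ≤ (g c - g s) * (c - s) :=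
      mul_le_mul_of_nonneg_left (by linarith) (sub_nonneg.2 hsc)
    rw [abs_of_nonpos (hneg hsm')]
    nlinarith [mul_le_mul_of_nonneg_left hcM₁ hδ]
  · nlinarith [mul_le_mul_of_nonneg_left (hmid hms' hsm) hδ]

theorem integral_abs_le_of_mul_abs_le {X : Type*} [MeasurableSpace X] {μ : Measure X}
    [IsFiniteMeasure μ] {f u : X → ℝ} {c δ L : ℝ} (hδ : 0 < δ) (hf : Integrable f μ)
    (hu : Integrable u μ) (hfu : Integrable (fun x => f x * u x) μ) (hu₀ : ∫ x, u x ∂μ = 0)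
    (h : ∀ x, δ * |f x| ≤ (f x - c) * u x + δ * L) :
    ∫ x, |f x| ∂μ ≤ 1 / δ * |∫ x, f x * u x ∂μ| + L * μ.real univ := by
  have hdiff : Integrable (fun x => f x * u x - c * u x) μ := hfu.sub (hu.const_mul c)
  have hmono : ∫ x, δ * |f x| ∂μ ≤ ∫ x, (f x * u x - c * u x + δ * L) ∂μ :=
    integral_mono (hf.abs.const_mul δ) (hdiff.add (integrable_const _)) fun x => by
      linarith [h x]
  rw [integral_const_mul, integral_add hdiff (integrable_const _),
    integral_sub hfu (hu.const_mul c), integral_const_mul, hu₀, integral_const,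
    smul_eq_mul] at hmono
  rw [one_div_mul_eq_div, ← sub_le_iff_le_add, le_div_iff₀ hδ]
  nlinarith [le_abs_self (∫ x, f x * u x ∂μ)]

theorem stmt_3_general {X : Type*} [MeasurableSpace X] (μ : Measure X) [IsFiniteMeasure μ]
    (θ : ℝ) (hθ : 0 < θ) (g : ℝ → ℝ)
    (hconv : ∀ s ∈ Ioo (-1:ℝ) 1, ∀ t ∈ Ioo (-1:ℝ) 1, θ * (t - s) ^ 2 ≤ (g t - g s) * (t - s))
    (m : ℝ) (hm : m ∈ Ico (0:ℝ) 1)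
    (hpos : ∀ s ∈ Ico m 1, 0 < g s) (hneg : ∀ s ∈ Ioc (-1) (-m), g s < 0)
    (φ : X → ℝ) (hφrange : ∀ x, φ x ∈ Ioo (-1:ℝ) 1)
    (hφint : Integrable φ μ)
    (φbar : ℝ) (hφbar : φbar = (∫ x, φ x ∂μ) / (μ univ).toReal)
    (hmean : |φbar| < m)
    (hgint : Integrable (fun x => g (φ x)) μ)
    (hgint2 : Integrable (fun x => g (φ x) * (φ x - φbar)) μ) :
    ∫ x, |g (φ x)| ∂μ ≤
      (1 / min (φbar + m) (m - φbar)) * |∫ x, g (φ x) * (φ x - φbar) ∂μ| +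
        2 * (⨆ s ∈ Icc (-m) m, |g s|) * (μ univ).toReal := by
  obtain ⟨hφbar₁, hφbar₂⟩ := abs_lt.1 hmean
  have hmono : MonotoneOn g (Ioo (-1) 1) := monotoneOn_of_mul_sub_nonneg fun s hs t ht =>
    (mul_nonneg hθ.le (sq_nonneg _)).trans (hconv s hs t ht)
  have hIcc : Icc (-m) m ⊆ Ioo (-1) 1 := Icc_subset_Ioo (by linarith [hm.2]) hm.2
  have hbdd : ∀ s ∈ Icc (-m) m, |g s| ≤ ⨆ t ∈ Icc (-m) m, |g t| := fun s hs =>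
    (hmono.mono hIcc).abs_le_biSup_abs hs
  have hφbar_mem : φbar ∈ Icc (-m) m := ⟨hφbar₁.le, hφbar₂.le⟩
  have hmean_zero : ∫ x, φ x - φbar ∂μ = 0 := by
    rw [hφbar]
    simpa only [average_eq, smul_eq_mul, inv_mul_eq_div, measureReal_def] using
      integral_sub_average μ φ
  have hδ : 0 < min (φbar + m) (m - φbar) := lt_min (by linarith) (by linarith)
  refine integral_abs_le_of_mul_abs_le (c := g φbar) hδ hgint
    (hφint.sub (integrable_const _)) hgint2 hmean_zero fun x => ?_
  obtain ⟨hφ₁, hφ₂⟩ := hφrange x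
  exact hmono.mul_abs_le (hφrange x) (hIcc hφbar_mem) (fun h => (hpos _ ⟨h, hφ₂⟩).le)
    (fun h => (hneg _ ⟨hφ₁, h⟩).le) (fun h₁ h₂ => hbdd _ ⟨h₁.le, h₂.le⟩) (hbdd _ hφbar_mem)
    hδ.le (min_le_left _ _) (min_le_right _ _)

theorem stmt_3 {X : Type*} [MeasurableSpace X] (μ : Measure X) [IsFiniteMeasure μ]
    (θ : ℝ) (hθ : 0 < θ) (F : ℝ → ℝ) (g : ℝ → ℝ) (hg : g = deriv F)
    (hF : ContDiffOn ℝ 1 F (Ioo (-1) 1))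
    (hconv : ∀ s ∈ Ioo (-1:ℝ) 1, ∀ t ∈ Ioo (-1:ℝ) 1, θ * (t - s) ^ 2 ≤ (g t - g s) * (t - s))
    (htop : Filter.Tendsto g (nhdsWithin 1 (Ioo (-1:ℝ) 1)) Filter.atTop)
    (hbot : Filter.Tendsto g (nhdsWithin (-1) (Ioo (-1:ℝ) 1)) Filter.atBot)
    (m : ℝ) (hm : m ∈ Ico (0:ℝ) 1)
    (hpos : ∀ s ∈ Ico m 1, 0 < g s) (hneg : ∀ s ∈ Ioc (-1) (-m), g s < 0)
    (φ : X → ℝ) (hφmeas : Measurable φ) (hφrange : ∀ x, φ x ∈ Ioo (-1:ℝ) 1)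
    (hφint : Integrable φ μ)
    (φbar : ℝ) (hφbar : φbar = (∫ x, φ x ∂μ) / (μ univ).toReal)
    (hmean : |φbar| < m)
    (hgint : Integrable (fun x => g (φ x)) μ)
    (hgint2 : Integrable (fun x => g (φ x) * (φ x - φbar)) μ) :
    ∫ x, |g (φ x)| ∂μ ≤
      (1 / min (φbar + m) (m - φbar)) * |∫ x, g (φ x) * (φ x - φbar) ∂μ| +
        2 * (⨆ s ∈ Icc (-m) m, |g s|) * (μ univ).toReal :=
  stmt_3_general μ θ hθ g hconv m hm hpos hneg φ hφrange hφint φbar hφbar hmean hgint hgint2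
end

section
/- Let A(t) be the invertible linear map A = J^{-1} D + n ⊗ n₀ associated to the normal flow map, with inverse A^{-1} = J D^{-} + n₀ ⊗ n. Then for any C¹ family of tangential divergence-free vector fields v on Γ(t), the two time derivatives satisfy ∂ₜ° v = ∂ₜ* v − A (∂ₜ° A^{-1}) v, where ∂ₜ* v := φ_t (d/dt)(φ_{−t} v) is the Piola-transported derivative and ∂ₜ° v := φ̃_t (d/dt)(φ̃_{−t} v) is the standard material derivative. In particular, if A and ∂ₜ°A^{-1} are uniformly bounded in C⁰, then ‖∂ₜ° v‖ ≤ ‖∂ₜ* v‖ + C‖v‖ and ‖∂ₜ* v‖ ≤ ‖∂ₜ° v‖ + C‖v‖ pointwise in time. -/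
/-- Relation between the two time derivatives on evolving spaces, in the pulled-back
frame: with `w t = φ̃₋ₜ v(t)`, `A`, `A⁻¹` the (Piola) transformation maps,
`q' t = d/dt (A⁻¹ w)` and `∂ₜ* v ↦ dstar t = A t (q' t)`, one has
`∂ₜ° v = ∂ₜ* v − A (∂ₜ° A⁻¹) v`, and if `‖A ∘ (A⁻¹)'‖ ≤ C` uniformly then the
two derivatives control each other up to `C‖v‖`. -/
theorem stmt_18 {F : Type*} [NormedAddCommGroup F] [NormedSpace ℝ F]
    (A Ainv Ainv' : ℝ → F →L[ℝ] F) (w w' q' : ℝ → F)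
    (hinv : ∀ t, (A t).comp (Ainv t) = ContinuousLinearMap.id ℝ F)
    (hw : ∀ t, HasDerivAt w (w' t) t)
    (hAinv : ∀ t, HasDerivAt Ainv (Ainv' t) t)
    (hq : ∀ t, HasDerivAt (fun s => Ainv s (w s)) (q' t) t)
    (dstar : ℝ → F) (hdstar : ∀ t, dstar t = A t (q' t)) :
    (∀ t, w' t = dstar t - A t (Ainv' t (w t))) ∧
    ∀ C : ℝ, (∀ t, ‖(A t).comp (Ainv' t)‖ ≤ C) →
      ∀ t, ‖w' t‖ ≤ ‖dstar t‖ + C * ‖w t‖ ∧ ‖dstar t‖ ≤ ‖w' t‖ + C * ‖w t‖ := by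
  have key : ∀ t, w' t = dstar t - A t (Ainv' t (w t)) := by
    intro t
    have h1 : HasDerivAt (fun s => Ainv s (w s)) (Ainv' t (w t) + Ainv t (w' t)) t :=
      (hAinv t).clm_apply (hw t)
    have hq' : q' t = Ainv' t (w t) + Ainv t (w' t) := (hq t).unique h1
    have hAw : A t (Ainv t (w' t)) = w' t := by
      have := congrArg (fun (L : F →L[ℝ] F) => L (w' t)) (hinv t)
      simpa using this
    rw [hdstar t, hq', map_add, hAw]
    abel
  refine ⟨key, fun C hC t => ?_⟩
  have hb : ‖A t (Ainv' t (w t))‖ ≤ C * ‖w t‖ := by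
    have := ((A t).comp (Ainv' t)).le_of_opNorm_le (hC t) (w t)
    simpa using this
  constructor
  · calc ‖w' t‖ = ‖dstar t - A t (Ainv' t (w t))‖ := by rw [key t]
      _ ≤ ‖dstar t‖ + ‖A t (Ainv' t (w t))‖ := norm_sub_le _ _
      _ ≤ ‖dstar t‖ + C * ‖w t‖ := by linarith
  · have : dstar t = w' t + A t (Ainv' t (w t)) := by rw [key t]; abel
    calc ‖dstar t‖ = ‖w' t + A t (Ainv' t (w t))‖ := by rw [this]
      _ ≤ ‖w' t‖ + ‖A t (Ainv' t (w t))‖ := norm_add_le _ _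
      _ ≤ ‖w' t‖ + C * ‖w t‖ := by linarith
end
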